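/- Let q > 0 and define N₁(s) = ((s/ω_l)² + s/ω_l + 1)/((s/ω_l)² + s/(q ω_l) + 1). Then the phase of N₁ at frequency ω = ζ ω_l, where ζ = (√2/2)·√((2q + 1 - √(1+4q))/q), equals arctan(ζ/(1-ζ²)) - arctan((ζ/q)/(1-ζ²)), and this frequency is a stationary point of the phase of N₁ on (0, ω_l), i.e. d/dω ∠N₁(jω) = 0 at ω = ζ ω_l. -/

import Mathlib

/-!
In the normalized frequency `x = ω/ωl`, with `D = (1 - x²)²`, the term
`arctan ((x/c)/(1 - x²))` has derivative `c (1 + x²)/(c² D + x²)`. The two terms of the phase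
(`c = 1` and `c = q`) have equal derivatives as soon as `q D = x²`.
-/

open Real

lemma hasDerivAt_arctan_div_div_one_sub_sq {c x : ℝ} (hc : c ≠ 0) (hx : 1 - x ^ 2 ≠ 0) :
    HasDerivAt (fun x => arctan (x / c / (1 - x ^ 2)))
      (c * (1 + x ^ 2) / (c ^ 2 * (1 - x ^ 2) ^ 2 + x ^ 2)) x := by
  have hsq := (hasDerivAt_pow 2 x).const_sub 1
  have hquot := ((hasDerivAt_id' x).div_const c).div hsq hx
  refine ((hasDerivAt_arctan _).comp x hquot).congr_deriv ?_
  have hD : 0 < (1 - x ^ 2) ^ 2 := sq_pos_of_ne_zero hx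
  have hden : 0 < c ^ 2 * (1 - x ^ 2) ^ 2 + x ^ 2 := by
    have := sq_pos_of_ne_zero hc
    positivity
  simp only [Pi.div_apply]
  field_simp
  ring

noncomputable def notchPhase (q x : ℝ) : ℝ :=
  arctan (x / (1 - x ^ 2)) - arctan (x / q / (1 - x ^ 2))

lemma hasDerivAt_notchPhase_zero {q x : ℝ} (hq : q ≠ 0) (hx : 1 - x ^ 2 ≠ 0)
    (hqx : q * (1 - x ^ 2) ^ 2 = x ^ 2) :
    HasDerivAt (notchPhase q) 0 x := by
  have h1 := hasDerivAt_arctan_div_div_one_sub_sq one_ne_zero hx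
  simp only [div_one, one_pow, one_mul] at h1
  refine (h1.sub (hasDerivAt_arctan_div_div_one_sub_sq hq hx)).congr_deriv ?_
  have hD : 0 < (1 - x ^ 2) ^ 2 := sq_pos_of_ne_zero hx
  field_simp
  linear_combination (1 + x ^ 2) * (q - 1) * hqx

/-- The `ζ` of the statement: its square is the smaller root `(2q + 1 - √(1 + 4q))/(2q)` of
`q t² - (2q + 1) t + q = 0`, i.e. of `q (1 - t)² = t`, and lies in `(0, 1)`. -/
noncomputable def stationaryRatio (q : ℝ) : ℝ :=
  √2 / 2 * √((2 * q + 1 - √(1 + 4 * q)) / q)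

section stationaryRatio

variable {q : ℝ} (hq : 0 < q)
include hq

lemma sqrt_one_add_four_mul_lt : √(1 + 4 * q) < 2 * q + 1 :=
  (sqrt_lt' (by linarith)).mpr (by nlinarith)

lemma one_lt_sqrt_one_add_four_mul : 1 < √(1 + 4 * q) :=
  (lt_sqrt zero_le_one).mpr (by linarith)

lemma stationaryRatio_sq :
    stationaryRatio q ^ 2 = (2 * q + 1 - √(1 + 4 * q)) / (2 * q) := by
  have harg : 0 ≤ (2 * q + 1 - √(1 + 4 * q)) / q :=
    div_nonneg (by linarith [sqrt_one_add_four_mul_lt hq]) hq.le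
  rw [stationaryRatio, mul_pow, div_pow, sq_sqrt zero_le_two, sq_sqrt harg]
  field_simp

lemma stationaryRatio_pos : 0 < stationaryRatio q :=
  mul_pos (by positivity) <| sqrt_pos.mpr <|
    div_pos (by linarith [sqrt_one_add_four_mul_lt hq]) hq

lemma stationaryRatio_lt_one : stationaryRatio q < 1 := by
  refine (sq_lt_one_iff₀ (stationaryRatio_pos hq).le).mp ?_
  rw [stationaryRatio_sq hq, div_lt_one (by positivity)]
  linarith [one_lt_sqrt_one_add_four_mul hq]

lemma mul_one_sub_stationaryRatio_sq_sq :
    q * (1 - stationaryRatio q ^ 2) ^ 2 = stationaryRatio q ^ 2 := by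
  have hs : √(1 + 4 * q) ^ 2 = 1 + 4 * q := sq_sqrt (by linarith)
  rw [stationaryRatio_sq hq]
  generalize √(1 + 4 * q) = s at hs
  field_simp
  linear_combination hs

end stationaryRatio

/-- the phase of the notch/anti-notch compensator
`N₁(s) = ((s/ωl)² + s/ωl + 1)/((s/ωl)² + s/(qωl) + 1)`, which at frequency `ω`
equals `arctan((ω/ωl)/(1-(ω/ωl)²)) - arctan(((ω/ωl)/q)/(1-(ω/ωl)²))`, takes the
stated value at `ω = ζ ωl` and is stationary there on `(0, ωl)`. -/
theorem stmt7 (q ωl : ℝ) (hq : 0 < q) (hωl : 0 < ωl)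
    (ζ : ℝ) (hζ : ζ = (Real.sqrt 2 / 2) * Real.sqrt ((2 * q + 1 - Real.sqrt (1 + 4 * q)) / q))
    (phase : ℝ → ℝ)
    (hphase : ∀ ω : ℝ, phase ω =
        Real.arctan ((ω / ωl) / (1 - (ω / ωl) ^ 2)) -
          Real.arctan (((ω / ωl) / q) / (1 - (ω / ωl) ^ 2))) :
    phase (ζ * ωl) =
        Real.arctan (ζ / (1 - ζ ^ 2)) - Real.arctan ((ζ / q) / (1 - ζ ^ 2)) ∧
      ζ * ωl ∈ Set.Ioo 0 ωl ∧ deriv phase (ζ * ωl) = 0 := by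
  obtain ⟨hζ_pos, hζ_lt_one, hζ_stationary⟩ :
      0 < ζ ∧ ζ < 1 ∧ q * (1 - ζ ^ 2) ^ 2 = ζ ^ 2 := by
    subst hζ
    exact ⟨stationaryRatio_pos hq, stationaryRatio_lt_one hq,
      mul_one_sub_stationaryRatio_sq_sq hq⟩
  have hnorm : ζ * ωl / ωl = ζ := mul_div_cancel_right₀ ζ hωl.ne'
  refine ⟨by rw [hphase, hnorm], ⟨mul_pos hζ_pos hωl, mul_lt_of_lt_one_left hωl hζ_lt_one⟩, ?_⟩
  have hζ_sq_ne : 1 - ζ ^ 2 ≠ 0 := by nlinarith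
  have hφ := hasDerivAt_notchPhase_zero hq.ne' hζ_sq_ne hζ_stationary
  rw [← hnorm] at hφ
  have hphase_eq : phase = notchPhase q ∘ fun ω => ω / ωl := funext hphase
  rw [hphase_eq, (hφ.comp (ζ * ωl) ((hasDerivAt_id' _).div_const ωl)).deriv, zero_mul]
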